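/- Let M_1, ..., M_n be pairwise commuting m×m real matrices and let M be the block upper-triangular Toeplitz matrix with blocks M(i,j) = M_{j−i+1} for i ≤ j and 0 for i > j. Then exp(M) is also block upper-triangular Toeplitz, with blocks E_1 = e^{M_1} on the diagonal and E_2 = e^{M_1} M_2 on the first superdiagonal (and E_3 = e^{M_1}(M_3 + M_2²/2) on the second superdiagonal when n ≥ 3). -/

import Mathlib

open Matrix

/-- The block upper-triangular Toeplitz matrix with block `(i, j)` equal to
`E (j − i)` for `i ≤ j` and `0` otherwise. -/
def blockToeplitz {n m : ℕ} (E : Fin n → Matrix (Fin m) (Fin m) ℝ) :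
    Matrix (Fin n × Fin m) (Fin n × Fin m) ℝ :=
  Matrix.of fun p q =>
    if (p.1 : ℕ) ≤ (q.1 : ℕ) then
      E ⟨(q.1 : ℕ) - (p.1 : ℕ), Nat.lt_of_le_of_lt (Nat.sub_le _ _) q.1.isLt⟩ p.2 q.2
    else 0

namespace BTAux

variable {n m : ℕ}

/-- Extend a `Fin n`-indexed family of blocks to `ℕ` by zero. -/
noncomputable def extF (E : Fin n → Matrix (Fin m) (Fin m) ℝ) (a : ℕ) :
    Matrix (Fin m) (Fin m) ℝ :=
  if h : a < n then E ⟨a, h⟩ else 0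

lemma extF_of_lt (E : Fin n → Matrix (Fin m) (Fin m) ℝ) {a : ℕ} (h : a < n) :
    extF E a = E ⟨a, h⟩ := dif_pos h

/-- Convolution of two block families. -/
noncomputable def conv (E F : Fin n → Matrix (Fin m) (Fin m) ℝ) (d : Fin n) :
    Matrix (Fin m) (Fin m) ℝ :=
  ∑ a ∈ Finset.range ((d : ℕ) + 1), extF E a * extF F ((d : ℕ) - a)

/-- The family giving rise to the identity block Toeplitz matrix. -/
noncomputable def oneF : Fin n → Matrix (Fin m) (Fin m) ℝ :=
  fun d => if (d : ℕ) = 0 then 1 else 0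

lemma blockToeplitz_one : blockToeplitz (oneF : Fin n → Matrix (Fin m) (Fin m) ℝ) = 1 := by
  ext ⟨p1, p2⟩ ⟨q1, q2⟩
  simp only [blockToeplitz, oneF, of_apply, Matrix.one_apply, Prod.mk.injEq]
  by_cases h : (p1 : ℕ) ≤ (q1 : ℕ)
  · rw [if_pos h]
    by_cases h2 : (q1 : ℕ) - (p1 : ℕ) = 0
    · have : p1 = q1 := by
        apply Fin.ext; omega
      simp [h2, this, Matrix.one_apply]
    · have : ¬ p1 = q1 := by
        intro hh; apply h2; rw [hh]; omega
      simp [h2, this]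
  · have : ¬ p1 = q1 := by
      intro hh; apply h; rw [hh]
    simp [h, this]

lemma blockToeplitz_mul (E F : Fin n → Matrix (Fin m) (Fin m) ℝ) :
    blockToeplitz E * blockToeplitz F = blockToeplitz (conv E F) := by
  ext ⟨p1, p2⟩ ⟨q1, q2⟩
  rw [Matrix.mul_apply, Fintype.sum_prod_type]
  have inner : ∀ r1 : Fin n,
      (∑ r2 : Fin m, blockToeplitz E (p1, p2) (r1, r2) * blockToeplitz F (r1, r2) (q1, q2))
      = if (p1 : ℕ) ≤ (r1 : ℕ) ∧ (r1 : ℕ) ≤ (q1 : ℕ) then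
          (extF E ((r1 : ℕ) - (p1 : ℕ)) * extF F ((q1 : ℕ) - (r1 : ℕ))) p2 q2 else 0 := by
    intro r1
    simp only [blockToeplitz, of_apply]
    by_cases h1 : (p1 : ℕ) ≤ (r1 : ℕ) <;> by_cases h2 : (r1 : ℕ) ≤ (q1 : ℕ) <;>
      simp only [h1, h2, if_true, if_false, and_true, and_false, true_and, false_and,
        zero_mul, mul_zero, Finset.sum_const_zero, if_neg, ite_true, ite_false]
    · rw [Matrix.mul_apply,
        extF_of_lt E (show (r1 : ℕ) - (p1 : ℕ) < n from Nat.lt_of_le_of_lt (Nat.sub_le _ _) r1.isLt),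
        extF_of_lt F (show (q1 : ℕ) - (r1 : ℕ) < n from Nat.lt_of_le_of_lt (Nat.sub_le _ _) q1.isLt)]
  rw [Finset.sum_congr rfl fun r1 _ => inner r1]
  rw [Fin.sum_univ_eq_sum_range (fun r1 : ℕ => if (p1 : ℕ) ≤ r1 ∧ r1 ≤ (q1 : ℕ) then
      (extF E (r1 - (p1 : ℕ)) * extF F ((q1 : ℕ) - r1)) p2 q2 else 0)]
  by_cases hpq : (p1 : ℕ) ≤ (q1 : ℕ)
  · simp only [blockToeplitz, of_apply, if_pos hpq, conv, Matrix.sum_apply]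
    rw [← Finset.sum_filter]
    have hfe : (Finset.range n).filter (fun r1 => (p1 : ℕ) ≤ r1 ∧ r1 ≤ (q1 : ℕ))
        = Finset.Ico (p1 : ℕ) ((q1 : ℕ) + 1) := by
      ext a
      simp only [Finset.mem_filter, Finset.mem_range, Finset.mem_Ico]
      have := q1.isLt
      omega
    rw [hfe, Finset.sum_Ico_eq_sum_range,
      show (q1 : ℕ) + 1 - (p1 : ℕ) = ((q1 : ℕ) - (p1 : ℕ)) + 1 by omega]
    apply Finset.sum_congr rfl
    intro a ha
    rw [Finset.mem_range] at ha
    rw [show (p1 : ℕ) + a - (p1 : ℕ) = a by omega,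
      show (q1 : ℕ) - ((p1 : ℕ) + a) = (q1 : ℕ) - (p1 : ℕ) - a by omega]
  · simp only [blockToeplitz, of_apply, if_neg hpq]
    apply Finset.sum_eq_zero
    intro a _
    rw [if_neg]
    omega

lemma blockToeplitz_add (E F : Fin n → Matrix (Fin m) (Fin m) ℝ) :
    blockToeplitz (E + F) = blockToeplitz E + blockToeplitz F := by
  ext ⟨p1, p2⟩ ⟨q1, q2⟩
  simp only [blockToeplitz, of_apply, Matrix.add_apply, Pi.add_apply]
  split_ifs <;> simp

lemma blockToeplitz_smul (c : ℝ) (E : Fin n → Matrix (Fin m) (Fin m) ℝ) :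
    blockToeplitz (c • E) = c • blockToeplitz E := by
  ext ⟨p1, p2⟩ ⟨q1, q2⟩
  simp only [blockToeplitz, of_apply, Matrix.smul_apply, Pi.smul_apply]
  split_ifs <;> simp

/-- Convolution powers. -/
noncomputable def convPow (M : Fin n → Matrix (Fin m) (Fin m) ℝ) : ℕ → Fin n → Matrix (Fin m) (Fin m) ℝ
  | 0 => oneF
  | (k + 1) => conv (convPow M k) M

lemma blockToeplitz_pow (M : Fin n → Matrix (Fin m) (Fin m) ℝ) (k : ℕ) :
    (blockToeplitz M) ^ k = blockToeplitz (convPow M k) := by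
  induction k with
  | zero => rw [pow_zero, convPow, blockToeplitz_one]
  | succ k ih => rw [pow_succ, ih, blockToeplitz_mul, convPow]

lemma conv_zero (E F : Fin n → Matrix (Fin m) (Fin m) ℝ) (h0 : 0 < n) :
    conv E F ⟨0, h0⟩ = E ⟨0, h0⟩ * F ⟨0, h0⟩ := by
  simp [conv, extF_of_lt E h0, extF_of_lt F h0]

lemma conv_one (E F : Fin n → Matrix (Fin m) (Fin m) ℝ) (h1 : 1 < n) :
    conv E F ⟨1, h1⟩ = E ⟨0, by omega⟩ * F ⟨1, h1⟩ + E ⟨1, h1⟩ * F ⟨0, by omega⟩ := by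
  have h0 : 0 < n := by omega
  simp [conv, Finset.sum_range_succ, extF_of_lt E h0, extF_of_lt F h0,
    extF_of_lt E h1, extF_of_lt F h1]

lemma conv_two (E F : Fin n → Matrix (Fin m) (Fin m) ℝ) (h2 : 2 < n) :
    conv E F ⟨2, h2⟩ = E ⟨0, Nat.zero_lt_two.trans h2⟩ * F ⟨2, h2⟩ + E ⟨1, Nat.one_lt_two.trans h2⟩ * F ⟨1, Nat.one_lt_two.trans h2⟩
      + E ⟨2, h2⟩ * F ⟨0, Nat.zero_lt_two.trans h2⟩ := by
  have h0 : 0 < n := by omega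
  have h1 : 1 < n := by omega
  simp [conv, Finset.sum_range_succ, extF_of_lt E h0, extF_of_lt F h0,
    extF_of_lt E h1, extF_of_lt F h1, extF_of_lt E h2, extF_of_lt F h2]

variable (M : Fin n → Matrix (Fin m) (Fin m) ℝ)

lemma convPow_zero (k : ℕ) (h0 : 0 < n) :
    convPow M k ⟨0, h0⟩ = (M ⟨0, h0⟩) ^ k := by
  induction k with
  | zero => simp [convPow, oneF]
  | succ k ih => rw [convPow, conv_zero _ _ h0, ih, pow_succ]

variable (hcomm : ∀ a b, M a * M b = M b * M a)
include hcomm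

lemma convPow_one (k : ℕ) (h1 : 1 < n) :
    convPow M k ⟨1, h1⟩ = k • ((M ⟨0, by omega⟩) ^ (k - 1) * M ⟨1, h1⟩) := by
  have h0 : 0 < n := by omega
  induction k with
  | zero => simp [convPow, oneF]
  | succ k ih =>
    rw [convPow, conv_one _ _ h1, convPow_zero, ih]
    rcases Nat.eq_zero_or_pos k with hk | hk
    · subst hk; simp
    · have hpow : (M ⟨0, h0⟩) ^ (k - 1) * M ⟨0, h0⟩ = (M ⟨0, h0⟩) ^ k := by
        conv_rhs => rw [show k = (k - 1) + 1 by omega]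
        rw [pow_succ]
      rw [smul_mul_assoc, mul_assoc, hcomm ⟨1, h1⟩ ⟨0, h0⟩, ← mul_assoc, hpow,
        Nat.succ_sub_one, succ_nsmul']

lemma convPow_two (k : ℕ) (h2 : 2 < n) :
    convPow M k ⟨2, h2⟩ = k • ((M ⟨0, Nat.zero_lt_two.trans h2⟩) ^ (k - 1) * M ⟨2, h2⟩)
      + (k.choose 2) • ((M ⟨0, Nat.zero_lt_two.trans h2⟩) ^ (k - 2) * (M ⟨1, Nat.one_lt_two.trans h2⟩) ^ 2) := by
  have h0 : 0 < n := by omega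
  have h1 : 1 < n := by omega
  set A := M ⟨0, h0⟩ with hA
  set B := M ⟨1, h1⟩ with hB
  set C := M ⟨2, h2⟩ with hC
  induction k with
  | zero => simp [convPow, oneF]
  | succ k ih =>
    rw [convPow, conv_two _ _ h2, convPow_zero, convPow_one M hcomm _ h1, ih]
    rcases k with _ | k
    · norm_num; rfl
    rcases k with _ | k
    · have hCA : C * A = A * C := hcomm _ _
      norm_num [Nat.choose]
      show A * C + B * B + C * A = 2 * (A * C) + B ^ 2
      rw [hCA, ← sq, two_mul]
      abel
    · -- k + 2 case
      have hA0 : ∀ (h : 0 < n), M ⟨0, h⟩ = A := fun _ => rfl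
      have hB1 : ∀ (h : 1 < n), M ⟨1, h⟩ = B := fun _ => rfl
      have hC2 : ∀ (h : 2 < n), M ⟨2, h⟩ = C := fun _ => rfl
      have hCA : C * A = A * C := hcomm _ _
      have hBA : B * A = A * B := hcomm _ _
      simp only [hA0, hB1, hC2, show k + 1 + 1 = k + 2 by omega, show k + 2 + 1 = k + 3 by omega,
        show k + 2 - 1 = k + 1 by omega, show k + 2 - 2 = k by omega,
        show k + 3 - 1 = k + 2 by omega, show k + 3 - 2 = k + 1 by omega] at ih ⊢
      have e1 : A ^ (k + 1) * A = A ^ (k + 2) := by rw [← pow_succ]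
      have e2 : A ^ k * A = A ^ (k + 1) := by rw [← pow_succ]
      have t1 : (k + 2) • (A ^ (k + 1) * C) * A = (k + 2) • (A ^ (k + 2) * C) := by
        rw [smul_mul_assoc, mul_assoc, hCA, ← mul_assoc, e1]
      have t2 : (k + 2).choose 2 • (A ^ k * B ^ 2) * A
          = (k + 2).choose 2 • (A ^ (k + 1) * B ^ 2) := by
        have hB2A : B ^ 2 * A = A * B ^ 2 := by
          rw [sq, mul_assoc, hBA, ← mul_assoc, hBA, mul_assoc]
        rw [smul_mul_assoc, mul_assoc, hB2A, ← mul_assoc, e2]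
      have t3 : (k + 2) • (A ^ (k + 1) * B) * B = (k + 2) • (A ^ (k + 1) * B ^ 2) := by
        rw [smul_mul_assoc, mul_assoc, ← sq]
      have hch : (k + 3).choose 2 = (k + 2) + (k + 2).choose 2 := by
        rw [show k + 3 = (k + 2) + 1 from rfl, Nat.choose_succ_succ]
        simp [Nat.choose_one_right]
      rw [add_mul, t1, t2, t3, hch]
      simp only [← Nat.cast_smul_eq_nsmul ℝ]
      push_cast
      module

end BTAux

open BTAux in
/-- The exponential of a block upper-triangular Toeplitz matrix built from
pairwise commuting blocks `M_1, …, M_n` is again block upper-triangular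
Toeplitz, with diagonal block `e^{M₁}`, first superdiagonal block `e^{M₁} M₂`,
and second superdiagonal block `e^{M₁}(M₃ + M₂²/2)`. -/
theorem exp_blockToeplitz {n m : ℕ}
    (M : Fin n → Matrix (Fin m) (Fin m) ℝ)
    (hcomm : ∀ a b, M a * M b = M b * M a) :
    ∃ E : Fin n → Matrix (Fin m) (Fin m) ℝ,
      NormedSpace.exp (blockToeplitz M) = blockToeplitz E
      ∧ (∀ h0 : 0 < n, E ⟨0, h0⟩ = NormedSpace.exp (M ⟨0, h0⟩))
      ∧ (∀ h1 : 1 < n,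
          E ⟨1, h1⟩ = NormedSpace.exp (M ⟨0, Nat.lt_of_succ_lt h1⟩)
            * M ⟨1, h1⟩)
      ∧ (∀ h2 : 2 < n,
          E ⟨2, h2⟩ = NormedSpace.exp (M ⟨0, by omega⟩)
            * (M ⟨2, h2⟩ + (1 / 2 : ℝ) • (M ⟨1, by omega⟩) ^ 2)) := by
  classical
  rcases Nat.eq_zero_or_pos n with hn | hn
  · subst hn
    exact ⟨M, Subsingleton.elim _ _, fun h => absurd h (by omega), fun h => absurd h (by omega),
      fun h => absurd h (by omega)⟩
  letI : SeminormedRing (Matrix (Fin m) (Fin m) ℝ) := Matrix.linftyOpSemiNormedRing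
  letI : NormedRing (Matrix (Fin m) (Fin m) ℝ) := Matrix.linftyOpNormedRing
  letI : NormedAlgebra ℝ (Matrix (Fin m) (Fin m) ℝ) := Matrix.linftyOpNormedAlgebra
  letI : SeminormedRing (Matrix (Fin n × Fin m) (Fin n × Fin m) ℝ) :=
    Matrix.linftyOpSemiNormedRing
  letI : NormedRing (Matrix (Fin n × Fin m) (Fin n × Fin m) ℝ) := Matrix.linftyOpNormedRing
  letI : NormedAlgebra ℝ (Matrix (Fin n × Fin m) (Fin n × Fin m) ℝ) :=
    Matrix.linftyOpNormedAlgebra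
  set x := blockToeplitz M with hx
  have hpow : ∀ k : ℕ, x ^ k = blockToeplitz (convPow M k) := blockToeplitz_pow M
  let bTL : (Fin n → Matrix (Fin m) (Fin m) ℝ) →ₗ[ℝ] Matrix (Fin n × Fin m) (Fin n × Fin m) ℝ :=
    { toFun := blockToeplitz
      map_add' := blockToeplitz_add
      map_smul' := blockToeplitz_smul }
  let roL : Matrix (Fin n × Fin m) (Fin n × Fin m) ℝ →ₗ[ℝ] (Fin n → Matrix (Fin m) (Fin m) ℝ) :=
    { toFun := fun A d => Matrix.of fun i j => A (⟨0, hn⟩, i) (d, j)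
      map_add' := fun _ _ => rfl
      map_smul' := fun _ _ => rfl }
  have hro : ∀ E : Fin n → Matrix (Fin m) (Fin m) ℝ, roL (blockToeplitz E) = E := by
    intro E; funext d; ext i j
    show blockToeplitz E (⟨0, hn⟩, i) (d, j) = E d i j
    simp only [blockToeplitz, of_apply]
    rw [if_pos (Nat.zero_le _)]
    exact congrFun (congrFun (congrArg E (Fin.ext (Nat.sub_zero _))) i) j
  have hsum : Summable (fun k : ℕ => ((k.factorial : ℝ))⁻¹ • x ^ k) :=
    NormedSpace.expSeries_summable' x
  have key : (fun k : ℕ => ((k.factorial : ℝ))⁻¹ • convPow M k)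
      = fun k => roL (((k.factorial : ℝ))⁻¹ • x ^ k) := by
    funext k; rw [_root_.map_smul, hpow, hro]
  have hsum2 : Summable (fun k : ℕ => ((k.factorial : ℝ))⁻¹ • convPow M k) := by
    rw [key]
    exact hsum.map roL.toAddMonoidHom roL.continuous_of_finiteDimensional
  set E := ∑' k : ℕ, ((k.factorial : ℝ))⁻¹ • convPow M k with hE
  have hmain : NormedSpace.exp x = blockToeplitz E := by
    rw [NormedSpace.exp_eq_tsum (𝕂 := ℝ)]
    have hterm : ∀ k : ℕ, ((k.factorial : ℝ))⁻¹ • x ^ k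
        = bTL (((k.factorial : ℝ))⁻¹ • convPow M k) := by
      intro k
      rw [_root_.map_smul, hpow]
      rfl
    simp_rw [hterm]
    exact (hsum2.map_tsum bTL.toAddMonoidHom bTL.continuous_of_finiteDimensional).symm
  have hsumd : ∀ d : Fin n, Summable (fun k : ℕ => ((k.factorial : ℝ))⁻¹ • convPow M k d) := by
    intro d
    have := Pi.summable.1 hsum2 d
    simpa using this
  have hEd : ∀ d : Fin n, E d = ∑' k : ℕ, ((k.factorial : ℝ))⁻¹ • convPow M k d := by
    intro d
    rw [hE, tsum_apply hsum2]
    simp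
  have hexp : ∀ A : Matrix (Fin m) (Fin m) ℝ,
      NormedSpace.exp A = ∑' k : ℕ, ((k.factorial : ℝ))⁻¹ • A ^ k := by
    intro A; rw [NormedSpace.exp_eq_tsum (𝕂 := ℝ)]
  have hfact : ∀ (k : ℕ) (X : Matrix (Fin m) (Fin m) ℝ),
      (((k + 1).factorial : ℝ))⁻¹ • ((k + 1) • X) = ((k.factorial : ℝ))⁻¹ • X := by
    intro k X
    rw [← Nat.cast_smul_eq_nsmul ℝ, smul_smul]
    congr 1
    have h2 : (k.factorial : ℝ) ≠ 0 := Nat.cast_ne_zero.mpr k.factorial_ne_zero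
    have h3 : ((k : ℝ) + 1) ≠ 0 := by positivity
    rw [Nat.factorial_succ]
    push_cast
    field_simp
  refine ⟨E, hmain, ?_, ?_, ?_⟩
  · intro h0
    rw [hEd, hexp]
    exact tsum_congr fun k => by rw [convPow_zero M k h0]
  · intro h1
    have h0 : 0 < n := by omega
    set A := M ⟨0, by omega⟩ with hA
    set B := M ⟨1, h1⟩ with hB
    have hsA : Summable (fun k : ℕ => ((k.factorial : ℝ))⁻¹ • A ^ k) :=
      NormedSpace.expSeries_summable' A
    have h1' : (fun k : ℕ => ((k.factorial : ℝ))⁻¹ • convPow M k ⟨1, h1⟩)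
        = fun k => ((k.factorial : ℝ))⁻¹ • (k • (A ^ (k - 1) * B)) := by
      funext k; rw [convPow_one M hcomm k h1]
    have hs1 : Summable (fun k : ℕ => ((k.factorial : ℝ))⁻¹ • (k • (A ^ (k - 1) * B))) := by
      rw [← h1']; exact hsumd _
    rw [hEd, h1', hs1.tsum_eq_zero_add]
    simp only [Nat.add_sub_cancel, Nat.factorial_zero, Nat.cast_one, inv_one, zero_smul,
      smul_zero, zero_add]
    have : (fun k : ℕ => (((k + 1).factorial : ℝ))⁻¹ • ((k + 1) • (A ^ k * B)))
        = fun k => (((k.factorial : ℝ))⁻¹ • A ^ k) * B := by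
      funext k
      rw [hfact, smul_mul_assoc]
    rw [this, hsA.tsum_mul_right, ← hexp]
  · intro h2
    have h0 : 0 < n := by omega
    have h1 : 1 < n := by omega
    set A := M ⟨0, by omega⟩ with hA
    set B := M ⟨1, by omega⟩ with hB
    set C := M ⟨2, h2⟩ with hC
    have hsA : Summable (fun k : ℕ => ((k.factorial : ℝ))⁻¹ • A ^ k) :=
      NormedSpace.expSeries_summable' A
    have hcc : ∀ j : ℕ, 2 * (j + 2).choose 2 = (j + 2) * (j + 1) := by
      intro j
      induction j with
      | zero => rfl
      | succ j ih =>
        rw [show j + 1 + 2 = (j + 2) + 1 from rfl, Nat.choose_succ_succ (j + 2) 1,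
          Nat.choose_one_right, Nat.mul_add, ih]
        ring
    have hfact2 : ∀ (k : ℕ) (X : Matrix (Fin m) (Fin m) ℝ),
        (((k + 2).factorial : ℝ))⁻¹ • (((k + 2).choose 2) • X)
          = (2 : ℝ)⁻¹ • (((k.factorial : ℝ))⁻¹ • X) := by
      intro k X
      rw [← Nat.cast_smul_eq_nsmul ℝ, smul_smul, smul_smul]
      congr 1
      have h2' : (k.factorial : ℝ) ≠ 0 := Nat.cast_ne_zero.mpr k.factorial_ne_zero
      have hden : (((k + 2).choose 2 : ℕ) : ℝ) * 2 = ((k : ℝ) + 2) * ((k : ℝ) + 1) := by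
        have h' : ((2 * (k + 2).choose 2 : ℕ) : ℝ) = (((k + 2) * (k + 1) : ℕ) : ℝ) := by
          rw [hcc k]
        push_cast at h'
        linarith
      rw [show k + 2 = (k + 1) + 1 from rfl, Nat.factorial_succ, Nat.factorial_succ]
      push_cast
      have hk1 : ((k : ℝ) + 1) ≠ 0 := by positivity
      have hk2 : ((k : ℝ) + 1 + 1) ≠ 0 := by positivity
      field_simp
      nlinarith [hden]
    -- the two pieces
    set g : ℕ → Matrix (Fin m) (Fin m) ℝ :=
      fun k => ((k.factorial : ℝ))⁻¹ • (k • (A ^ (k - 1) * C)) with hg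
    set h : ℕ → Matrix (Fin m) (Fin m) ℝ :=
      fun k => ((k.factorial : ℝ))⁻¹ • ((k.choose 2) • (A ^ (k - 2) * B ^ 2)) with hh
    have h2' : (fun k : ℕ => ((k.factorial : ℝ))⁻¹ • convPow M k ⟨2, h2⟩)
        = fun k => g k + h k := by
      funext k
      rw [convPow_two M hcomm k h2, smul_add]
    have hgs : (fun k : ℕ => g (k + 1)) = fun k => (((k.factorial : ℝ))⁻¹ • A ^ k) * C := by
      funext k
      simp only [hg, Nat.add_sub_cancel]
      rw [hfact, smul_mul_assoc]
    have hsg' : Summable (fun k : ℕ => (((k.factorial : ℝ))⁻¹ • A ^ k) * C) := hsA.mul_right C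
    have hsg : Summable g := by
      rw [← summable_nat_add_iff 1, hgs]
      exact hsg'
    have hhs : (fun k : ℕ => h (k + 2))
        = fun k => (2 : ℝ)⁻¹ • ((((k.factorial : ℝ))⁻¹ • A ^ k) * (B ^ 2)) := by
      funext k
      simp only [hh, Nat.add_sub_cancel]
      rw [hfact2, smul_mul_assoc]
    have hsh' : Summable (fun k : ℕ => (2 : ℝ)⁻¹ • ((((k.factorial : ℝ))⁻¹ • A ^ k) * (B ^ 2))) :=
      (hsA.mul_right (B ^ 2)).const_smul _
    have hsh : Summable h := by
      rw [← summable_nat_add_iff 2, hhs]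
      exact hsh'
    rw [hEd, h2', hsg.tsum_add hsh]
    have hg0 : g 0 = 0 := by simp [hg]
    have hgsum : ∑' k, g k = NormedSpace.exp A * C := by
      rw [hsg.tsum_eq_zero_add, hg0, zero_add, hgs, hsA.tsum_mul_right, ← hexp]
    have hh0 : h 0 = 0 := by simp [hh]
    have hh1 : h 1 = 0 := by simp [hh]
    have hhsum : ∑' k, h k = (2 : ℝ)⁻¹ • (NormedSpace.exp A * B ^ 2) := by
      rw [hsh.tsum_eq_zero_add, hh0, zero_add,
        ((summable_nat_add_iff 1).2 hsh).tsum_eq_zero_add, hh1, zero_add]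
      have : (fun k : ℕ => h (k + 1 + 1)) = fun k => h (k + 2) := by
        funext k; rw [show k + 1 + 1 = k + 2 from rfl]
      rw [this, hhs, tsum_const_smul'' _, hsA.tsum_mul_right, ← hexp]
    rw [hgsum, hhsum]
    rw [mul_add, mul_smul_comm]
    norm_num
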